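/- arXiv:1707.03793 — 5 statements merged into one kernel-verified Lean document; each statement's English description precedes it below -/
import Mathlib

section
/- Let n ∈ ℕ and let ∼ be the equivalence relation on index pairs in [2n]² induced by the matrix space M_n^{DIII} (respectively M_n^{CI}). Then: (i) every equivalence class of ∼ contains at most 4 index pairs, i.e. α₂(2n) := max_{(p,q)} #{(r,s) ∈ [2n]² : (p,q) ∼ (r,s)} ≤ 4; and (ii) there is no triple (p,q,r) ∈ [2n]³ with p ≠ r and (p,q) ∼ (q,r), i.e. α̂₀(2n) := #{(p,q,r) ∈ [2n]³ : (p,q) ∼ (q,r), p ≠ r} = 0. -/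
open Matrix

noncomputable section

/-- The space `M_n^{DIII}`: block matrices `[[X₁,X₂],[X₂,−X₁]]` with `X₁, X₂`
skew-symmetric with purely imaginary entries. `[2n]` is encoded as `Fin n ⊕ Fin n`. -/
def MDIII (n : ℕ) : Set (Matrix (Fin n ⊕ Fin n) (Fin n ⊕ Fin n) ℂ) :=
  {M | ∃ X₁ X₂ : Matrix (Fin n) (Fin n) ℂ,
    (∀ a b, (X₁ a b).re = 0) ∧ (∀ a b, (X₂ a b).re = 0) ∧
    X₁ᵀ = -X₁ ∧ X₂ᵀ = -X₂ ∧ M = Matrix.fromBlocks X₁ X₂ X₂ (-X₁)}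

/-- The space `M_n^{CI}`: block matrices `[[X₁,X₂],[X₂,−X₁]]` with `X₁, X₂`
real symmetric. -/
def MCI (n : ℕ) : Set (Matrix (Fin n ⊕ Fin n) (Fin n ⊕ Fin n) ℝ) :=
  {M | ∃ X₁ X₂ : Matrix (Fin n) (Fin n) ℝ,
    X₁ᵀ = X₁ ∧ X₂ᵀ = X₂ ∧ M = Matrix.fromBlocks X₁ X₂ X₂ (-X₁)}

/-- `(p,q) ∼ (r,s)` relative to a set `S` of matrices: both coordinate functionals
on `S` are nonzero and equal up to sign. -/
def simRel {R : Type*} [Ring R] {ι : Type*} (S : Set (Matrix ι ι R))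
    (P Q : ι × ι) : Prop :=
  (∃ M ∈ S, M P.1 P.2 ≠ 0) ∧ (∃ M ∈ S, M Q.1 Q.2 ≠ 0) ∧
    ((∀ M ∈ S, M Q.1 Q.2 = M P.1 P.2) ∨ (∀ M ∈ S, M Q.1 Q.2 = -(M P.1 P.2)))

/-- The candidate 4-element class of an index pair. -/
def cls {n : ℕ} (P : (Fin n ⊕ Fin n) × (Fin n ⊕ Fin n)) :
    Set ((Fin n ⊕ Fin n) × (Fin n ⊕ Fin n)) :=
  {P, (P.2, P.1), (P.1.swap, P.2.swap), (P.2.swap, P.1.swap)}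

lemma cls_finite {n : ℕ} (P : (Fin n ⊕ Fin n) × (Fin n ⊕ Fin n)) : (cls P).Finite := by
  unfold cls
  exact (Set.finite_singleton _).insert _ |>.insert _ |>.insert _

lemma cls_ncard_le {n : ℕ} (P : (Fin n ⊕ Fin n) × (Fin n ⊕ Fin n)) : (cls P).ncard ≤ 4 := by
  unfold cls
  refine le_trans (Set.ncard_insert_le _ _) ?_
  refine le_trans (Nat.add_le_add_right (Set.ncard_insert_le _ _) 1) ?_
  refine le_trans (Nat.add_le_add_right (Nat.add_le_add_right (Set.ncard_insert_le _ _) 1) 1) ?_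
  simp [Set.ncard_singleton]

lemma mem_cls_of_simRel {R ι : Type*} [Ring R] {S : Set (Matrix ι ι R)}
    {P Q : ι × ι} {C : Set (ι × ι)}
    (hw : ∃ M ∈ S, M P.1 P.2 ≠ 0 ∧ ∀ Q', Q' ∉ C → M Q'.1 Q'.2 = 0)
    (h : simRel S P Q) : Q ∈ C := by
  by_contra hQ
  obtain ⟨M, hM, hMP, hsupp⟩ := hw
  have h0 : M Q.1 Q.2 = 0 := hsupp Q hQ
  rcases h.2.2 with hs | hs
  · exact hMP ((hs M hM).symm.trans h0)
  · exact hMP (neg_eq_zero.mp ((hs M hM).symm.trans h0))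

lemma swap_ne {n : ℕ} (x : Fin n ⊕ Fin n) : Sum.swap x ≠ x := by
  rcases x with x | x <;> simp

/-! ### Witness matrices -/

def skewE (n : ℕ) (a b : Fin n) : Matrix (Fin n) (Fin n) ℂ :=
  fun x y => if x = a ∧ y = b then Complex.I else if x = b ∧ y = a then -Complex.I else 0

lemma skewE_re (n : ℕ) (a b x y : Fin n) : (skewE n a b x y).re = 0 := by
  unfold skewE; split_ifs <;> simp

lemma skewE_transpose (n : ℕ) {a b : Fin n} (hab : a ≠ b) :
    (skewE n a b)ᵀ = -(skewE n a b) := by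
  ext x y
  simp only [transpose_apply, Matrix.neg_apply, skewE]
  split_ifs <;> try ring
  all_goals exfalso
  all_goals
    first
      | exact hab (by simp_all)
      | simp_all [and_comm]

lemma skewE_apply_self (n : ℕ) {a b : Fin n} (hab : a ≠ b) :
    skewE n a b a b = Complex.I := by
  simp [skewE]

lemma skewE_apply_zero (n : ℕ) {a b x y : Fin n}
    (h1 : ¬(x = a ∧ y = b)) (h2 : ¬(x = b ∧ y = a)) : skewE n a b x y = 0 := by
  simp [skewE, h1, h2]

def symE (n : ℕ) (a b : Fin n) : Matrix (Fin n) (Fin n) ℝ :=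
  fun x y => (if x = a ∧ y = b then 1 else 0) + (if x = b ∧ y = a then 1 else 0)

lemma symE_transpose (n : ℕ) (a b : Fin n) : (symE n a b)ᵀ = symE n a b := by
  ext x y
  simp only [transpose_apply, symE]
  rw [add_comm]
  congr 1 <;> simp [and_comm]

lemma symE_apply_self (n : ℕ) (a b : Fin n) : symE n a b a b ≠ 0 := by
  by_cases h : a = b <;> simp [symE, h]

lemma symE_apply_zero (n : ℕ) {a b x y : Fin n}
    (h1 : ¬(x = a ∧ y = b)) (h2 : ¬(x = b ∧ y = a)) : symE n a b x y = 0 := by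
  simp [symE, h1, h2]

lemma diag_eq_zero {R : Type*} [Ring R] [NoZeroDivisors R] [CharZero R]
    {n : ℕ} {X : Matrix (Fin n) (Fin n) R} (h : Xᵀ = -X) (a : Fin n) : X a a = 0 := by
  have := congrFun (congrFun h a) a
  simp only [transpose_apply, Matrix.neg_apply] at this
  have h2 : X a a + X a a = 0 := by nth_rewrite 1 [this]; exact neg_add_cancel _
  rwa [add_self_eq_zero] at h2

/-! membership of witnesses -/

lemma mem_MDIII_same (n : ℕ) {a b : Fin n} (hab : a ≠ b) :
    fromBlocks (skewE n a b) 0 0 (-(skewE n a b)) ∈ MDIII n :=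
  ⟨skewE n a b, 0, fun x y => skewE_re n a b x y, fun _ _ => by simp,
    skewE_transpose n hab, by simp, rfl⟩

lemma mem_MDIII_cross (n : ℕ) {a b : Fin n} (hab : a ≠ b) :
    fromBlocks 0 (skewE n a b) (skewE n a b) 0 ∈ MDIII n :=
  ⟨0, skewE n a b, fun _ _ => by simp, fun x y => skewE_re n a b x y,
    by simp, skewE_transpose n hab, by simp⟩

lemma mem_MCI_same (n : ℕ) (a b : Fin n) :
    fromBlocks (symE n a b) 0 0 (-(symE n a b)) ∈ MCI n :=
  ⟨symE n a b, 0, symE_transpose n a b, by simp, rfl⟩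

lemma mem_MCI_cross (n : ℕ) (a b : Fin n) :
    fromBlocks 0 (symE n a b) (symE n a b) 0 ∈ MCI n :=
  ⟨0, symE n a b, by simp, symE_transpose n a b, by simp⟩

/-! ### The witness lemmas -/

lemma wit_DIII {n : ℕ} (P : (Fin n ⊕ Fin n) × (Fin n ⊕ Fin n))
    (hP : ∃ M ∈ MDIII n, M P.1 P.2 ≠ 0) :
    ∃ M ∈ MDIII n, M P.1 P.2 ≠ 0 ∧ ∀ Q, Q ∉ cls P → M Q.1 Q.2 = 0 := by
  obtain ⟨p, q⟩ := P
  obtain ⟨M, ⟨X₁, X₂, h1, h2, h3, h4, rfl⟩, hne⟩ := hP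
  rcases p with a | a <;> rcases q with b | b
  · -- (inl a, inl b)
    have hab : a ≠ b := by
      rintro rfl
      exact hne (by simpa [fromBlocks] using diag_eq_zero h3 a)
    refine ⟨_, mem_MDIII_same n hab, ?_, ?_⟩
    · simpa [fromBlocks, skewE_apply_self n hab] using Complex.I_ne_zero
    · rintro ⟨r, s⟩ hQ
      simp only [cls, Set.mem_insert_iff, Set.mem_singleton_iff, Prod.mk.injEq, not_or,
        Sum.swap_inl] at hQ
      rcases r with x | x <;> rcases s with y | y <;>
        simp only [fromBlocks_apply₁₁, fromBlocks_apply₁₂, fromBlocks_apply₂₁,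
          fromBlocks_apply₂₂, Matrix.zero_apply, Matrix.neg_apply, neg_eq_zero]
      · exact skewE_apply_zero n
          (by rintro ⟨rfl, rfl⟩; exact hQ.1 ⟨rfl, rfl⟩)
          (by rintro ⟨rfl, rfl⟩; exact hQ.2.1 ⟨rfl, rfl⟩)
      · exact skewE_apply_zero n
          (by rintro ⟨rfl, rfl⟩; exact hQ.2.2.1 ⟨rfl, rfl⟩)
          (by rintro ⟨rfl, rfl⟩; exact hQ.2.2.2 ⟨rfl, rfl⟩)
  · -- (inl a, inr b)
    have hab : a ≠ b := by
      rintro rfl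
      exact hne (by simpa [fromBlocks] using diag_eq_zero h4 a)
    refine ⟨_, mem_MDIII_cross n hab, ?_, ?_⟩
    · simpa [fromBlocks, skewE_apply_self n hab] using Complex.I_ne_zero
    · rintro ⟨r, s⟩ hQ
      simp only [cls, Set.mem_insert_iff, Set.mem_singleton_iff, Prod.mk.injEq, not_or,
        Sum.swap_inl, Sum.swap_inr] at hQ
      rcases r with x | x <;> rcases s with y | y <;>
        simp only [fromBlocks_apply₁₁, fromBlocks_apply₁₂, fromBlocks_apply₂₁,
          fromBlocks_apply₂₂, Matrix.zero_apply, Matrix.neg_apply, neg_eq_zero]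
      · exact skewE_apply_zero n
          (by rintro ⟨rfl, rfl⟩; exact hQ.1 ⟨rfl, rfl⟩)
          (by rintro ⟨rfl, rfl⟩; exact hQ.2.2.2 ⟨rfl, rfl⟩)
      · exact skewE_apply_zero n
          (by rintro ⟨rfl, rfl⟩; exact hQ.2.2.1 ⟨rfl, rfl⟩)
          (by rintro ⟨rfl, rfl⟩; exact hQ.2.1 ⟨rfl, rfl⟩)
  · -- (inr a, inl b)
    have hab : a ≠ b := by
      rintro rfl
      exact hne (by simpa [fromBlocks] using diag_eq_zero h4 a)
    refine ⟨_, mem_MDIII_cross n hab, ?_, ?_⟩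
    · simpa [fromBlocks, skewE_apply_self n hab] using Complex.I_ne_zero
    · rintro ⟨r, s⟩ hQ
      simp only [cls, Set.mem_insert_iff, Set.mem_singleton_iff, Prod.mk.injEq, not_or,
        Sum.swap_inl, Sum.swap_inr] at hQ
      rcases r with x | x <;> rcases s with y | y <;>
        simp only [fromBlocks_apply₁₁, fromBlocks_apply₁₂, fromBlocks_apply₂₁,
          fromBlocks_apply₂₂, Matrix.zero_apply, Matrix.neg_apply, neg_eq_zero]
      · exact skewE_apply_zero n
          (by rintro ⟨rfl, rfl⟩; exact hQ.2.2.1 ⟨rfl, rfl⟩)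
          (by rintro ⟨rfl, rfl⟩; exact hQ.2.1 ⟨rfl, rfl⟩)
      · exact skewE_apply_zero n
          (by rintro ⟨rfl, rfl⟩; exact hQ.1 ⟨rfl, rfl⟩)
          (by rintro ⟨rfl, rfl⟩; exact hQ.2.2.2 ⟨rfl, rfl⟩)
  · -- (inr a, inr b)
    have hab : a ≠ b := by
      rintro rfl
      exact hne (by simpa [fromBlocks] using diag_eq_zero h3 a)
    refine ⟨_, mem_MDIII_same n hab, ?_, ?_⟩
    · simpa [fromBlocks, skewE_apply_self n hab] using Complex.I_ne_zero
    · rintro ⟨r, s⟩ hQ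
      simp only [cls, Set.mem_insert_iff, Set.mem_singleton_iff, Prod.mk.injEq, not_or,
        Sum.swap_inr] at hQ
      rcases r with x | x <;> rcases s with y | y <;>
        simp only [fromBlocks_apply₁₁, fromBlocks_apply₁₂, fromBlocks_apply₂₁,
          fromBlocks_apply₂₂, Matrix.zero_apply, Matrix.neg_apply, neg_eq_zero]
      · exact skewE_apply_zero n
          (by rintro ⟨rfl, rfl⟩; exact hQ.2.2.1 ⟨rfl, rfl⟩)
          (by rintro ⟨rfl, rfl⟩; exact hQ.2.2.2 ⟨rfl, rfl⟩)
      · exact skewE_apply_zero n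
          (by rintro ⟨rfl, rfl⟩; exact hQ.1 ⟨rfl, rfl⟩)
          (by rintro ⟨rfl, rfl⟩; exact hQ.2.1 ⟨rfl, rfl⟩)

lemma wit_CI {n : ℕ} (P : (Fin n ⊕ Fin n) × (Fin n ⊕ Fin n))
    (hP : ∃ M ∈ MCI n, M P.1 P.2 ≠ 0) :
    ∃ M ∈ MCI n, M P.1 P.2 ≠ 0 ∧ ∀ Q, Q ∉ cls P → M Q.1 Q.2 = 0 := by
  obtain ⟨p, q⟩ := P
  clear hP
  rcases p with a | a <;> rcases q with b | b
  · refine ⟨_, mem_MCI_same n a b, ?_, ?_⟩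
    · simpa [fromBlocks] using symE_apply_self n a b
    · rintro ⟨r, s⟩ hQ
      simp only [cls, Set.mem_insert_iff, Set.mem_singleton_iff, Prod.mk.injEq, not_or,
        Sum.swap_inl] at hQ
      rcases r with x | x <;> rcases s with y | y <;>
        simp only [fromBlocks_apply₁₁, fromBlocks_apply₁₂, fromBlocks_apply₂₁,
          fromBlocks_apply₂₂, Matrix.zero_apply, Matrix.neg_apply, neg_eq_zero]
      · exact symE_apply_zero n
          (by rintro ⟨rfl, rfl⟩; exact hQ.1 ⟨rfl, rfl⟩)
          (by rintro ⟨rfl, rfl⟩; exact hQ.2.1 ⟨rfl, rfl⟩)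
      · exact symE_apply_zero n
          (by rintro ⟨rfl, rfl⟩; exact hQ.2.2.1 ⟨rfl, rfl⟩)
          (by rintro ⟨rfl, rfl⟩; exact hQ.2.2.2 ⟨rfl, rfl⟩)
  · refine ⟨_, mem_MCI_cross n a b, ?_, ?_⟩
    · simpa [fromBlocks] using symE_apply_self n a b
    · rintro ⟨r, s⟩ hQ
      simp only [cls, Set.mem_insert_iff, Set.mem_singleton_iff, Prod.mk.injEq, not_or,
        Sum.swap_inl, Sum.swap_inr] at hQ
      rcases r with x | x <;> rcases s with y | y <;>
        simp only [fromBlocks_apply₁₁, fromBlocks_apply₁₂, fromBlocks_apply₂₁,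
          fromBlocks_apply₂₂, Matrix.zero_apply, Matrix.neg_apply, neg_eq_zero]
      · exact symE_apply_zero n
          (by rintro ⟨rfl, rfl⟩; exact hQ.1 ⟨rfl, rfl⟩)
          (by rintro ⟨rfl, rfl⟩; exact hQ.2.2.2 ⟨rfl, rfl⟩)
      · exact symE_apply_zero n
          (by rintro ⟨rfl, rfl⟩; exact hQ.2.2.1 ⟨rfl, rfl⟩)
          (by rintro ⟨rfl, rfl⟩; exact hQ.2.1 ⟨rfl, rfl⟩)
  · refine ⟨_, mem_MCI_cross n a b, ?_, ?_⟩
    · simpa [fromBlocks] using symE_apply_self n a b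
    · rintro ⟨r, s⟩ hQ
      simp only [cls, Set.mem_insert_iff, Set.mem_singleton_iff, Prod.mk.injEq, not_or,
        Sum.swap_inl, Sum.swap_inr] at hQ
      rcases r with x | x <;> rcases s with y | y <;>
        simp only [fromBlocks_apply₁₁, fromBlocks_apply₁₂, fromBlocks_apply₂₁,
          fromBlocks_apply₂₂, Matrix.zero_apply, Matrix.neg_apply, neg_eq_zero]
      · exact symE_apply_zero n
          (by rintro ⟨rfl, rfl⟩; exact hQ.2.2.1 ⟨rfl, rfl⟩)
          (by rintro ⟨rfl, rfl⟩; exact hQ.2.1 ⟨rfl, rfl⟩)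
      · exact symE_apply_zero n
          (by rintro ⟨rfl, rfl⟩; exact hQ.1 ⟨rfl, rfl⟩)
          (by rintro ⟨rfl, rfl⟩; exact hQ.2.2.2 ⟨rfl, rfl⟩)
  · refine ⟨_, mem_MCI_same n a b, ?_, ?_⟩
    · simpa [fromBlocks] using symE_apply_self n a b
    · rintro ⟨r, s⟩ hQ
      simp only [cls, Set.mem_insert_iff, Set.mem_singleton_iff, Prod.mk.injEq, not_or,
        Sum.swap_inr] at hQ
      rcases r with x | x <;> rcases s with y | y <;>
        simp only [fromBlocks_apply₁₁, fromBlocks_apply₁₂, fromBlocks_apply₂₁,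
          fromBlocks_apply₂₂, Matrix.zero_apply, Matrix.neg_apply, neg_eq_zero]
      · exact symE_apply_zero n
          (by rintro ⟨rfl, rfl⟩; exact hQ.2.2.1 ⟨rfl, rfl⟩)
          (by rintro ⟨rfl, rfl⟩; exact hQ.2.2.2 ⟨rfl, rfl⟩)
      · exact symE_apply_zero n
          (by rintro ⟨rfl, rfl⟩; exact hQ.1 ⟨rfl, rfl⟩)
          (by rintro ⟨rfl, rfl⟩; exact hQ.2.1 ⟨rfl, rfl⟩)

/-! ### Assembling -/

lemma ncard_le_of_wit {R : Type*} [Ring R] {n : ℕ}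
    {S : Set (Matrix (Fin n ⊕ Fin n) (Fin n ⊕ Fin n) R)}
    (hw : ∀ P, (∃ M ∈ S, M P.1 P.2 ≠ 0) →
      ∃ M ∈ S, M P.1 P.2 ≠ 0 ∧ ∀ Q, Q ∉ cls P → M Q.1 Q.2 = 0)
    (P : (Fin n ⊕ Fin n) × (Fin n ⊕ Fin n)) :
    Set.ncard {Q | simRel S P Q} ≤ 4 := by
  have hsub : {Q | simRel S P Q} ⊆ cls P := by
    intro Q hQ
    exact mem_cls_of_simRel (hw P hQ.1) hQ
  calc Set.ncard {Q | simRel S P Q} ≤ (cls P).ncard :=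
        Set.ncard_le_ncard hsub (cls_finite P)
    _ ≤ 4 := cls_ncard_le P

lemma no_triple_of_wit {R : Type*} [Ring R] {n : ℕ}
    {S : Set (Matrix (Fin n ⊕ Fin n) (Fin n ⊕ Fin n) R)}
    (hw : ∀ P, (∃ M ∈ S, M P.1 P.2 ≠ 0) →
      ∃ M ∈ S, M P.1 P.2 ≠ 0 ∧ ∀ Q, Q ∉ cls P → M Q.1 Q.2 = 0) :
    ¬ ∃ p q r : Fin n ⊕ Fin n, p ≠ r ∧ simRel S (p, q) (q, r) := by
  rintro ⟨p, q, r, hpr, hsim⟩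
  have hmem : (q, r) ∈ cls (p, q) := mem_cls_of_simRel (hw (p, q) hsim.1) hsim
  simp only [cls, Set.mem_insert_iff, Set.mem_singleton_iff, Prod.mk.injEq] at hmem
  rcases hmem with ⟨hq, hr⟩ | ⟨_, hr⟩ | ⟨hq, hr⟩ | ⟨hq, _⟩
  · exact hpr (hq ▸ hr.symm)
  · exact hpr hr.symm
  · exact hpr (by rw [hr, hq, Sum.swap_swap])
  · exact swap_ne q hq.symm


theorem stmt3 (n : ℕ) :
    -- (i) `α₂(2n) ≤ 4` for class DIII
    (∀ P : (Fin n ⊕ Fin n) × (Fin n ⊕ Fin n),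
      Set.ncard {Q | simRel (MDIII n) P Q} ≤ 4) ∧
    -- (i) `α₂(2n) ≤ 4` for class CI
    (∀ P : (Fin n ⊕ Fin n) × (Fin n ⊕ Fin n),
      Set.ncard {Q | simRel (MCI n) P Q} ≤ 4) ∧
    -- (ii) `α̂₀(2n) = 0` for class DIII
    (¬ ∃ p q r : Fin n ⊕ Fin n, p ≠ r ∧ simRel (MDIII n) (p, q) (q, r)) ∧
    -- (ii) `α̂₀(2n) = 0` for class CI
    (¬ ∃ p q r : Fin n ⊕ Fin n, p ≠ r ∧ simRel (MCI n) (p, q) (q, r)) := by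
  exact ⟨ncard_le_of_wit wit_DIII, ncard_le_of_wit wit_CI,
   no_triple_of_wit wit_DIII, no_triple_of_wit wit_CI⟩
end
end

section
/- Let (Δ_l, Λ_l)_{l∈[m]} be an m-pattern such that (Δ_l)_{l∈[m]} satisfies the domino condition and such that Λ_l = A and Λ_{l+1} = R for some l ∈ [m] (indices cyclic). Then there is a constant C > 0 such that for every n the number of consistent instances of the pattern is at most C·n^{m−1}; in particular the pattern is negligible. -/
open Matrix Filter Asymptotics

noncomputable section

/-- A Δ-matrix: a `2 × 2` matrix with entries in `{0,1}` whose entries sum to an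
even number. -/
def IsDelta (D : Matrix (Fin 2) (Fin 2) ℕ) : Prop :=
  (∀ i j, D i j ≤ 1) ∧ Even (D 0 0 + D 0 1 + D 1 0 + D 1 1)

/-- The `(i,j)` entry of `Λ(a,b)`, where `Λ = A` (aligned, `[[a,b],[a,b]]`) if the
Boolean is `true` and `Λ = R` (reversed, `[[a,b],[b,a]]`) if it is `false`. -/
def lam (Λ : Bool) (a b : ℕ) : Fin 2 → Fin 2 → ℕ
  | 0, 0 => a
  | 0, 1 => b
  | 1, 0 => if Λ then a else b
  | 1, 1 => if Λ then b else a

/-- The number of consistent instances, over `[n]`, of the `m`-pattern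
`(Δ_l, Λ_l)_{l∈[m]}`: the number of choices of `a_l, b_l ∈ [n]`, `a_l ≠ b_l`, such
that the sequence of `2 × 2` matrices `(nΔ_l + Λ_l(a_l,b_l))_l` is cyclically
consistent (the second column of each term equals the first column of the next). -/
def consistentCount (m : ℕ) [NeZero m]
    (Δ : Fin m → Matrix (Fin 2) (Fin 2) ℕ) (Λ : Fin m → Bool) (n : ℕ) : ℕ :=
  Set.ncard {ab : (Fin m → ℕ) × (Fin m → ℕ) |
    (∀ l, ab.1 l ∈ Finset.Icc 1 n ∧ ab.2 l ∈ Finset.Icc 1 n ∧ ab.1 l ≠ ab.2 l) ∧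
    ∀ (i : Fin 2) (l : Fin m),
      n * Δ l i 1 + lam (Λ l) (ab.1 l) (ab.2 l) i 1 =
        n * Δ (l + 1) i 0 + lam (Λ (l + 1)) (ab.1 (l + 1)) (ab.2 (l + 1)) i 0}

/-- A pattern is negligible if its number of consistent instances is `o(n^m)`. -/
def Negligible (m : ℕ) [NeZero m]
    (Δ : Fin m → Matrix (Fin 2) (Fin 2) ℕ) (Λ : Fin m → Bool) : Prop :=
  (fun n : ℕ => (consistentCount m Δ Λ n : ℝ)) =o[atTop] fun n : ℕ => (n : ℝ) ^ m

theorem stmt6 (m : ℕ) [NeZero m]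
    (Δ : Fin m → Matrix (Fin 2) (Fin 2) ℕ) (Λ : Fin m → Bool)
    (hΔ : ∀ l, IsDelta (Δ l))
    (hdomino : ∀ l, Δ l 0 1 = Δ (l + 1) 0 0 ∧ Δ l 1 1 = Δ (l + 1) 1 0)
    (hmix : ∃ l, Λ l = true ∧ Λ (l + 1) = false) :
    (∃ C : ℝ, 0 < C ∧
      ∀ n : ℕ, (consistentCount m Δ Λ n : ℝ) ≤ C * (n : ℝ) ^ (m - 1)) ∧
    Negligible m Δ Λ := by
  have hzero : ∀ n : ℕ, consistentCount m Δ Λ n = 0 := by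
    intro n
    unfold consistentCount
    convert Set.ncard_empty ((Fin m → ℕ) × (Fin m → ℕ))
    ext ⟨a, b⟩
    simp only [Set.mem_setOf_eq, Set.mem_empty_iff_false, iff_false, not_and]
    rintro h1 h2
    obtain ⟨l, hA, hR⟩ := hmix
    have e0 := h2 0 l
    have e1 := h2 1 l
    rw [hA, hR] at e0 e1
    simp [lam] at e0 e1
    have d0 := (hdomino l).1
    have d1 := (hdomino l).2
    have hne := (h1 (l + 1)).2.2
    rw [d0] at e0
    rw [d1] at e1
    omega
  refine ⟨⟨1, one_pos, fun n => ?_⟩, ?_⟩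
  · rw [hzero]
    push_cast
    positivity
  · have : (fun n : ℕ => (consistentCount m Δ Λ n : ℝ)) = fun _ => (0 : ℝ) := by
      funext n; rw [hzero]; norm_num
    rw [Negligible, this]
    exact isLittleO_zero _ _
end
end

section
/- Let X_n be the Class DIII Wigner-type ensemble, let m ≥ 3, let g = γ^ν be a cyclic shift of [m], and let P = (P_{i,l}) be a multi-index in S_n^{good}(π̂_g) such that for every l ∈ [m] the 2×2 matrix [[p_{1,l}, q_{1,l}],[p_{2,g(l)}, q_{2,g(l)}]] equals nΔ_l + A(a_l,b_l) for some Δ-matrix Δ_l and some a_l ≠ b_l in [n] (so the associated pattern is substantial and (Δ_l) satisfies the domino condition). If P_{1,l} = P_{2,g(l)} for some l ∈ [m], then P_{1,l} = P_{2,g(l)} for all l ∈ [m], and ∏_{l=1}^m E[a_n(P_{1,l})·a_n(P_{2,g(l)})] = (−1)^m·σ^{2m}. -/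
/-!
Writing the rows of `[[p_{1,l}, q_{1,l}],[p_{2,g(l)}, q_{2,g(l)}]]` as block positions, consistency
of `P` is exactly the domino condition on `(Δ_l)`. If the two rows of `Δ_l` agree, then so do the
first-column entries of `Δ_{l+1}`, and evenness of its entry sum forces its second-column entries
to agree too; since `g` commutes with `l ↦ l + 1`, the equality `P_{1,l} = P_{2,g(l)}` propagates
around the cycle. Each factor is then `E[Z²]` for a purely imaginary `Z` of variance `σ²`, i.e.
`-σ²`.
-/

open MeasureTheory ProbabilityTheory Matrix Filter

noncomputable section

/-- `blk d a` is index `a` in the first block row/column if `d = 0`, and in the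
second block row/column otherwise (encoding `n·d + a` in `[2n]`). -/
def blk {n : ℕ} (d : ℕ) (a : Fin n) : Fin n ⊕ Fin n :=
  if d = 0 then Sum.inl a else Sum.inr a

/-- The (unnormalized) class DIII block matrix built from `X₁, X₂`; its `(p,q)` entry
is `a_n(p,q)`, the `(p,q)` entry of `√(2n)·X_n`. -/
def dIIIBlock {n : ℕ} (X₁ X₂ : Matrix (Fin n) (Fin n) ℂ) :
    Matrix (Fin n ⊕ Fin n) (Fin n ⊕ Fin n) ℂ :=
  Matrix.fromBlocks X₁ X₂ X₂ (-X₁)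

/-- The coordinate functional `X ↦ X_{p,q}` on `M_n^{DIII}` is nonzero. -/
def NonzeroAtDIII (n : ℕ) (P : (Fin n ⊕ Fin n) × (Fin n ⊕ Fin n)) : Prop :=
  ∃ M ∈ MDIII n, M P.1 P.2 ≠ 0

/-- `(p,q) ∼ (r,s)`: both coordinate functionals on `M_n^{DIII}` are nonzero and
equal up to sign. -/
def simDIII (n : ℕ) (P Q : (Fin n ⊕ Fin n) × (Fin n ⊕ Fin n)) : Prop :=
  NonzeroAtDIII n P ∧ NonzeroAtDIII n Q ∧
    ((∀ M ∈ MDIII n, M Q.1 Q.2 = M P.1 P.2) ∨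
      (∀ M ∈ MDIII n, M Q.1 Q.2 = -(M P.1 P.2)))

/-- A multi-index `P = (P_{i,l}) = ((p_{i,l},q_{i,l}))` is consistent if
`q_{i,l} = p_{i,l+1}` cyclically, for `i = 1, 2`. -/
def IsConsistent {n m : ℕ} [NeZero m]
    (P : Fin 2 → Fin m → ((Fin n ⊕ Fin n) × (Fin n ⊕ Fin n))) : Prop :=
  ∀ i l, (P i l).2 = (P i (l + 1)).1

/-- `P ∈ S_n^{good}(π̂_g)`: `P` is a consistent multi-index, every `P_{i,l}` lies in
the domain of `∼`, and the `∼`-relations among the `2m` index pairs are exactly those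
given by the pair partition `π̂_g = {{(1,l),(2,g(l))} : l ∈ [m]}`. -/
def SGoodDIII (n m : ℕ) [NeZero m] (g : Fin m → Fin m)
    (P : Fin 2 → Fin m → ((Fin n ⊕ Fin n) × (Fin n ⊕ Fin n))) : Prop :=
  IsConsistent P ∧ (∀ i l, NonzeroAtDIII n (P i l)) ∧
    ∀ i l i' l', simDIII n (P i l) (P i' l') ↔
      ((i = i' ∧ l = l') ∨ (i = 0 ∧ i' = 1 ∧ l' = g l) ∨ (i = 1 ∧ i' = 0 ∧ l = g l'))

/-- The block positions `(n·D_{i,0} + x, n·D_{i,1} + y)` of the `i`-th row of `n·D + A(x, y)`. -/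
def blkRow {n : ℕ} (D : Matrix (Fin 2) (Fin 2) ℕ) (i : Fin 2) (x y : Fin n) :
    (Fin n ⊕ Fin n) × (Fin n ⊕ Fin n) :=
  (blk (D i 0) x, blk (D i 1) y)

lemma blk_injective {n d d' : ℕ} {x y : Fin n} (hd : d ≤ 1) (hd' : d' ≤ 1)
    (h : blk d x = blk d' y) : d = d' ∧ x = y := by
  unfold blk at h
  interval_cases d <;> interval_cases d' <;> simp_all

lemma blkRow_eq_blkRow_iff {n : ℕ} {D : Matrix (Fin 2) (Fin 2) ℕ} (hD : ∀ i j, D i j ≤ 1)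
    (x y : Fin n) : blkRow D 0 x y = blkRow D 1 x y ↔ D 0 0 = D 1 0 ∧ D 0 1 = D 1 1 := by
  refine ⟨fun h => ?_, fun h => by simp only [blkRow, h]⟩
  rw [blkRow, blkRow, Prod.mk.injEq] at h
  exact ⟨(blk_injective (hD 0 0) (hD 1 0) h.1).1, (blk_injective (hD 0 1) (hD 1 1) h.2).1⟩

lemma IsDelta.col_one_eq_of_col_zero_eq {D : Matrix (Fin 2) (Fin 2) ℕ} (hD : IsDelta D)
    (h : D 0 0 = D 1 0) : D 0 1 = D 1 1 := by
  obtain ⟨hle, hev⟩ := hD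
  have := hle 0 1
  have := hle 1 1
  rw [Nat.even_iff] at hev
  omega

lemma dIIIBlock_blk_sq {n d d' : ℕ} (X₁ X₂ : Matrix (Fin n) (Fin n) ℂ) (hd : d ≤ 1)
    (hd' : d' ≤ 1) (x y : Fin n) :
    dIIIBlock X₁ X₂ (blk d x) (blk d' y) ^ 2 = (if d = d' then X₁ x y else X₂ x y) ^ 2 := by
  interval_cases d <;> interval_cases d' <;> simp [blk, dIIIBlock]

open Fin.NatCast in
lemma Fin.forall_of_add_one {m : ℕ} [NeZero m] {p : Fin m → Prop} (l₀ : Fin m) (h₀ : p l₀)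
    (hstep : ∀ l, p l → p (l + 1)) (l : Fin m) : p l := by
  have hk : ∀ k : ℕ, p (l₀ + (k : Fin m)) := by
    intro k
    induction k with
    | zero => simpa using h₀
    | succ k ih => simpa [Nat.cast_succ, ← add_assoc] using hstep _ ih
  simpa using hk (l - l₀).val

lemma sq_eq_neg_norm_sq_of_re_eq_zero {z : ℂ} (hz : z.re = 0) : z ^ 2 = -((‖z‖ ^ 2 : ℝ) : ℂ) := by
  rw [← Complex.ofReal_neg, Complex.sq_norm, Complex.normSq_apply, hz]
  apply Complex.ext <;> simp [pow_two, hz]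

lemma integral_sq_of_re_eq_zero {Ω : Type*} [MeasurableSpace Ω] (μ : Measure Ω) {Z : Ω → ℂ}
    (hZ : ∀ ω, (Z ω).re = 0) : ∫ ω, Z ω ^ 2 ∂μ = -((∫ ω, ‖Z ω‖ ^ 2 ∂μ : ℝ) : ℂ) := by
  rw [← integral_complex_ofReal, ← integral_neg]
  exact integral_congr_ae (ae_of_all _ fun ω => sq_eq_neg_norm_sq_of_re_eq_zero (hZ ω))

section Domino

variable {n m : ℕ} [NeZero m] {P : Fin 2 → Fin m → ((Fin n ⊕ Fin n) × (Fin n ⊕ Fin n))}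
  {g : Fin m → Fin m} {Δ : Fin m → Matrix (Fin 2) (Fin 2) ℕ} {a b : Fin m → Fin n}

lemma IsConsistent.domino (hP : IsConsistent P) (hg : ∀ l, g (l + 1) = g l + 1)
    (hΔ : ∀ l i j, Δ l i j ≤ 1)
    (hinst : ∀ l, P 0 l = blkRow (Δ l) 0 (a l) (b l) ∧ P 1 (g l) = blkRow (Δ l) 1 (a l) (b l))
    (l : Fin m) : Δ l 0 1 = Δ (l + 1) 0 0 ∧ Δ l 1 1 = Δ (l + 1) 1 0 := by
  have h₀ := hP 0 l
  have h₁ := hP 1 (g l)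
  rw [(hinst l).1, (hinst (l + 1)).1] at h₀
  rw [(hinst l).2, ← hg, (hinst (l + 1)).2] at h₁
  exact ⟨(blk_injective (hΔ l 0 1) (hΔ (l + 1) 0 0) h₀).1,
    (blk_injective (hΔ l 1 1) (hΔ (l + 1) 1 0) h₁).1⟩

lemma IsConsistent.forall_eq_of_exists_eq (hP : IsConsistent P) (hg : ∀ l, g (l + 1) = g l + 1)
    (hΔ : ∀ l, IsDelta (Δ l))
    (hinst : ∀ l, P 0 l = blkRow (Δ l) 0 (a l) (b l) ∧ P 1 (g l) = blkRow (Δ l) 1 (a l) (b l))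
    (hex : ∃ l, P 0 l = P 1 (g l)) (l : Fin m) : P 0 l = P 1 (g l) := by
  have hrow : ∀ l, P 0 l = P 1 (g l) ↔ Δ l 0 0 = Δ l 1 0 ∧ Δ l 0 1 = Δ l 1 1 := fun l => by
    rw [(hinst l).1, (hinst l).2, blkRow_eq_blkRow_iff (hΔ l).1]
  obtain ⟨l₀, hl₀⟩ := hex
  refine Fin.forall_of_add_one (p := fun l => P 0 l = P 1 (g l)) l₀ hl₀ (fun l hl => ?_) l
  obtain ⟨-, hcol⟩ := (hrow l).1 hl
  have hdom := hP.domino hg (fun l => (hΔ l).1) hinst l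
  have hcol₀ : Δ (l + 1) 0 0 = Δ (l + 1) 1 0 := by rw [← hdom.1, ← hdom.2, hcol]
  exact (hrow (l + 1)).2 ⟨hcol₀, (hΔ (l + 1)).col_one_eq_of_col_zero_eq hcol₀⟩

end Domino

theorem stmt7_general
    {Ω : Type*} [MeasurableSpace Ω] (μ : Measure Ω)
    (σ : ℝ)
    (X : (n : ℕ) → Fin 2 → Ω → Matrix (Fin n) (Fin n) ℂ)
    (him : ∀ n i ω a b, (X n i ω a b).re = 0)
    (hvar : ∀ n i (a b : Fin n), a ≠ b → ∫ ω, ‖X n i ω a b‖ ^ 2 ∂μ = σ ^ 2)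
    (m : ℕ) [NeZero m] (ν : ℕ) (hν : ν < m)
    (g : Fin m → Fin m) (hg : g = fun l => l + ⟨ν, hν⟩)
    (n : ℕ) (P : Fin 2 → Fin m → ((Fin n ⊕ Fin n) × (Fin n ⊕ Fin n)))
    (hP : SGoodDIII n m g P)
    (Δ : Fin m → Matrix (Fin 2) (Fin 2) ℕ) (hΔ : ∀ l, IsDelta (Δ l))
    (a b : Fin m → Fin n) (hab : ∀ l, a l ≠ b l)
    -- `[[p_{1,l}, q_{1,l}],[p_{2,g(l)}, q_{2,g(l)}]] = nΔ_l + A(a_l, b_l)`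
    (hinst : ∀ l, P 0 l = (blk (Δ l 0 0) (a l), blk (Δ l 0 1) (b l)) ∧
      P 1 (g l) = (blk (Δ l 1 0) (a l), blk (Δ l 1 1) (b l)))
    (hex : ∃ l, P 0 l = P 1 (g l)) :
    (∀ l, P 0 l = P 1 (g l)) ∧
    ∏ l : Fin m, ∫ ω, dIIIBlock (X n 0 ω) (X n 1 ω) (P 0 l).1 (P 0 l).2 *
        dIIIBlock (X n 0 ω) (X n 1 ω) (P 1 (g l)).1 (P 1 (g l)).2 ∂μ
      = (-1 : ℂ) ^ m * (σ : ℂ) ^ (2 * m) := by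
  have hg' : ∀ l, g (l + 1) = g l + 1 := by simp [hg, add_right_comm]
  have hall := hP.1.forall_eq_of_exists_eq hg' hΔ hinst hex
  refine ⟨hall, ?_⟩
  have hfactor : ∀ l, ∫ ω, dIIIBlock (X n 0 ω) (X n 1 ω) (P 0 l).1 (P 0 l).2 *
      dIIIBlock (X n 0 ω) (X n 1 ω) (P 1 (g l)).1 (P 1 (g l)).2 ∂μ = -(σ : ℂ) ^ 2 := by
    intro l
    simp_rw [← hall l, ← pow_two, (hinst l).1,
      dIIIBlock_blk_sq _ _ ((hΔ l).1 0 0) ((hΔ l).1 0 1)]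
    split_ifs <;>
      rw [integral_sq_of_re_eq_zero μ (fun ω => him n _ ω _ _), hvar n _ _ _ (hab l)] <;>
      push_cast <;> ring
  rw [Finset.prod_congr rfl fun l _ => hfactor l, Finset.prod_const, Finset.card_univ,
    Fintype.card_fin, neg_eq_neg_one_mul, mul_pow, ← pow_mul, mul_comm 2 m]

theorem stmt7
    {Ω : Type*} [MeasurableSpace Ω] (μ : Measure Ω) [IsProbabilityMeasure μ]
    (σ : ℝ) (hσ : 0 < σ)
    (X : (n : ℕ) → Fin 2 → Ω → Matrix (Fin n) (Fin n) ℂ)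
    (hmeas : ∀ n i a b, Measurable fun ω => X n i ω a b)
    (him : ∀ n i ω a b, (X n i ω a b).re = 0)
    (hskew : ∀ n i ω a b, X n i ω b a = - X n i ω a b)
    (hindep : ∀ n, iIndepFun
      (fun (v : {v : Fin 2 × Fin n × Fin n // v.2.1 < v.2.2}) ω =>
        X n v.1.1 ω v.1.2.1 v.1.2.2) μ)
    (hcent : ∀ n i a b, ∫ ω, X n i ω a b ∂μ = 0)
    (hvar : ∀ n i (a b : Fin n), a ≠ b → ∫ ω, ‖X n i ω a b‖ ^ 2 ∂μ = σ ^ 2)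
    (hmom : ∀ k : ℕ, ∃ C : ℝ, ∀ n i (a b : Fin n),
      ∫ ω, ‖X n i ω a b‖ ^ k ∂μ ≤ C)
    (m : ℕ) [NeZero m] (hm : 3 ≤ m) (ν : ℕ) (hν : ν < m)
    (g : Fin m → Fin m) (hg : g = fun l => l + ⟨ν, hν⟩)
    (n : ℕ) (P : Fin 2 → Fin m → ((Fin n ⊕ Fin n) × (Fin n ⊕ Fin n)))
    (hP : SGoodDIII n m g P)
    (Δ : Fin m → Matrix (Fin 2) (Fin 2) ℕ) (hΔ : ∀ l, IsDelta (Δ l))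
    (a b : Fin m → Fin n) (hab : ∀ l, a l ≠ b l)
    -- `[[p_{1,l}, q_{1,l}],[p_{2,g(l)}, q_{2,g(l)}]] = nΔ_l + A(a_l, b_l)`
    (hinst : ∀ l, P 0 l = (blk (Δ l 0 0) (a l), blk (Δ l 0 1) (b l)) ∧
      P 1 (g l) = (blk (Δ l 1 0) (a l), blk (Δ l 1 1) (b l)))
    (hex : ∃ l, P 0 l = P 1 (g l)) :
    (∀ l, P 0 l = P 1 (g l)) ∧
    ∏ l : Fin m, ∫ ω, dIIIBlock (X n 0 ω) (X n 1 ω) (P 0 l).1 (P 0 l).2 *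
        dIIIBlock (X n 0 ω) (X n 1 ω) (P 1 (g l)).1 (P 1 (g l)).2 ∂μ
      = (-1 : ℂ) ^ m * (σ : ℂ) ^ (2 * m) :=
  stmt7_general μ σ X him hvar m ν hν g hg n P hP Δ hΔ a b hab hinst hex
end
end

section
/- Let X_n be the Class DIII Wigner-type ensemble, let a ≠ b in [n], let Δ be a Δ-matrix, and write nΔ + A(a,b) = [[p₁,q₁],[p₂,q₂]]. Then E[a_n(p₁,q₁)·a_n(p₂,q₂)] = −σ² if Δ is one of [[0,0],[0,0]], [[1,1],[1,1]], [[0,1],[0,1]], [[1,0],[1,0]], [[1,0],[0,1]], [[0,1],[1,0]], and E[a_n(p₁,q₁)·a_n(p₂,q₂)] = σ² if Δ is [[0,0],[1,1]] or [[1,1],[0,0]]. -/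
open MeasureTheory ProbabilityTheory Matrix

noncomputable section

theorem Complex.mul_self_eq_neg_sq_norm_of_re_eq_zero {z : ℂ} (hz : z.re = 0) :
    z * z = -((‖z‖ ^ 2 : ℝ) : ℂ) := by
  rw [Complex.sq_norm]
  apply Complex.ext <;> simp [Complex.normSq_apply, hz]

theorem integral_mul_self_of_re_eq_zero {Ω : Type*} [MeasurableSpace Ω] {μ : Measure Ω}
    {f : Ω → ℂ} (hf : ∀ ω, (f ω).re = 0) :
    ∫ ω, f ω * f ω ∂μ = -((∫ ω, ‖f ω‖ ^ 2 ∂μ : ℝ) : ℂ) := by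
  simp_rw [Complex.mul_self_eq_neg_sq_norm_of_re_eq_zero (hf _), integral_neg,
    integral_complex_ofReal]

theorem stmt9_general
    {Ω : Type*} [MeasurableSpace Ω] (μ : Measure Ω)
    (σ : ℝ)
    (X : (n : ℕ) → Fin 2 → Ω → Matrix (Fin n) (Fin n) ℂ)
    (him : ∀ n i ω a b, (X n i ω a b).re = 0)
    (hvar : ∀ n i (a b : Fin n), a ≠ b → ∫ ω, ‖X n i ω a b‖ ^ 2 ∂μ = σ ^ 2)
    (n : ℕ) (a b : Fin n) (hab : a ≠ b)
    (Δ : Matrix (Fin 2) (Fin 2) ℕ) :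
    ((Δ = !![0,0;0,0] ∨ Δ = !![1,1;1,1] ∨ Δ = !![0,1;0,1] ∨ Δ = !![1,0;1,0] ∨
        Δ = !![1,0;0,1] ∨ Δ = !![0,1;1,0]) →
      ∫ ω, dIIIBlock (X n 0 ω) (X n 1 ω) (blk (Δ 0 0) a) (blk (Δ 0 1) b) *
            dIIIBlock (X n 0 ω) (X n 1 ω) (blk (Δ 1 0) a) (blk (Δ 1 1) b) ∂μ
        = -(σ : ℂ) ^ 2) ∧
    ((Δ = !![0,0;1,1] ∨ Δ = !![1,1;0,0]) →
      ∫ ω, dIIIBlock (X n 0 ω) (X n 1 ω) (blk (Δ 0 0) a) (blk (Δ 0 1) b) *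
            dIIIBlock (X n 0 ω) (X n 1 ω) (blk (Δ 1 0) a) (blk (Δ 1 1) b) ∂μ
        = (σ : ℂ) ^ 2) := by
  -- Both rows of `nΔ + A(a,b)` select the `(a,b)` entry of a block, so every product is
  -- `±X_i(a,b)²`, and `E[X_i(a,b)²] = -σ²` because the entry is purely imaginary.
  have hsq : ∀ i, ∫ ω, X n i ω a b * X n i ω a b ∂μ = -(σ : ℂ) ^ 2 := fun i => by
    rw [integral_mul_self_of_re_eq_zero (him n i · a b), hvar n i a b hab, Complex.ofReal_pow]
  constructor
  · rintro (rfl | rfl | rfl | rfl | rfl | rfl) <;>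
      simp only [dIIIBlock, blk, of_apply, cons_val', cons_val_zero, cons_val_one,
        empty_val', cons_val_fin_one, one_ne_zero, reduceIte, fromBlocks_apply₁₁,
        fromBlocks_apply₁₂, fromBlocks_apply₂₁, fromBlocks_apply₂₂, Matrix.neg_apply, neg_mul_neg] <;>
      apply hsq
  · rintro (rfl | rfl) <;>
      simp only [dIIIBlock, blk, of_apply, cons_val', cons_val_zero, cons_val_one,
        empty_val', cons_val_fin_one, one_ne_zero, reduceIte, fromBlocks_apply₁₁,
        fromBlocks_apply₂₂, Matrix.neg_apply, mul_neg, neg_mul, integral_neg, hsq, neg_neg]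

theorem stmt9
    {Ω : Type*} [MeasurableSpace Ω] (μ : Measure Ω) [IsProbabilityMeasure μ]
    (σ : ℝ) (hσ : 0 < σ)
    (X : (n : ℕ) → Fin 2 → Ω → Matrix (Fin n) (Fin n) ℂ)
    (hmeas : ∀ n i a b, Measurable fun ω => X n i ω a b)
    (him : ∀ n i ω a b, (X n i ω a b).re = 0)
    (hskew : ∀ n i ω a b, X n i ω b a = - X n i ω a b)
    (hindep : ∀ n, iIndepFun
      (fun (v : {v : Fin 2 × Fin n × Fin n // v.2.1 < v.2.2}) ω =>
        X n v.1.1 ω v.1.2.1 v.1.2.2) μ)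
    (hcent : ∀ n i a b, ∫ ω, X n i ω a b ∂μ = 0)
    (hvar : ∀ n i (a b : Fin n), a ≠ b → ∫ ω, ‖X n i ω a b‖ ^ 2 ∂μ = σ ^ 2)
    (hmom : ∀ k : ℕ, ∃ C : ℝ, ∀ n i (a b : Fin n),
      ∫ ω, ‖X n i ω a b‖ ^ k ∂μ ≤ C)
    (n : ℕ) (a b : Fin n) (hab : a ≠ b)
    (Δ : Matrix (Fin 2) (Fin 2) ℕ) (hΔ : IsDelta Δ) :
    ((Δ = !![0,0;0,0] ∨ Δ = !![1,1;1,1] ∨ Δ = !![0,1;0,1] ∨ Δ = !![1,0;1,0] ∨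
        Δ = !![1,0;0,1] ∨ Δ = !![0,1;1,0]) →
      ∫ ω, dIIIBlock (X n 0 ω) (X n 1 ω) (blk (Δ 0 0) a) (blk (Δ 0 1) b) *
            dIIIBlock (X n 0 ω) (X n 1 ω) (blk (Δ 1 0) a) (blk (Δ 1 1) b) ∂μ
        = -(σ : ℂ) ^ 2) ∧
    ((Δ = !![0,0;1,1] ∨ Δ = !![1,1;0,0]) →
      ∫ ω, dIIIBlock (X n 0 ω) (X n 1 ω) (blk (Δ 0 0) a) (blk (Δ 0 1) b) *
            dIIIBlock (X n 0 ω) (X n 1 ω) (blk (Δ 1 0) a) (blk (Δ 1 1) b) ∂μ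
        = (σ : ℂ) ^ 2) :=
  stmt9_general μ σ X him hvar n a b hab Δ
end
end

section
/- Let m ≥ 1 and let (Δ_l)_{l∈[m]} be a cyclic sequence of Δ-matrices satisfying the reverse domino condition with Δ₁ ∈ G₂ = {[[0,1],[0,1]], [[1,0],[1,0]], [[0,0],[1,1]], [[1,1],[0,0]]}. Then every Δ_l lies in G₂, and the number of indices l ∈ [m] with Δ_l ∈ {[[0,0],[1,1]], [[1,1],[0,0]]} is congruent to m modulo 2; in particular this number is odd if m is odd and even if m is even. -/
open Matrix

noncomputable section

/-- The second group of Δ-matrices. -/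
def G2 : Set (Matrix (Fin 2) (Fin 2) ℕ) :=
  {!![0,1;0,1], !![1,0;1,0], !![0,0;1,1], !![1,1;0,0]}

/-!
A Δ-matrix lies in `G2` exactly when `α + δ = 1`, and then also `β + γ = 1`; the reverse
domino condition turns `β_l + γ_l` into `α_{l+1} + δ_{l+1}`, so membership in `G2` propagates
around the cycle. Along the cycle the top-left entry satisfies `α_{l+1} = β_l`, which equals
`α_l` for the two horizontal matrices `[[0,0],[1,1]]`, `[[1,1],[0,0]]` and differs from it for
the two vertical ones. A `0/1` sequence changes value an even number of times around a cycle, so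
the number of vertical matrices is even.
-/

open Finset

theorem Fin.forall_of_cyclic_step {m : ℕ} [NeZero m] {p : Fin m → Prop} (h0 : p 0)
    (hstep : ∀ l, p l → p (l + 1)) (l : Fin m) : p l := by
  have hcast : ∀ n : ℕ, p (Fin.ofNat m n) := by
    intro n
    induction n with
    | zero => exact h0
    | succ n ih =>
      have hsucc : Fin.ofNat m (n + 1) = Fin.ofNat m n + 1 := by ext; simp [Fin.val_add]
      exact hsucc ▸ hstep _ ih
  simpa using hcast l

theorem Fin.even_card_filter_succ_ne {m : ℕ} [NeZero m] (f : Fin m → ZMod 2) :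
    Even #{l | f (l + 1) ≠ f l} := by
  have hjump : ∀ x y : ZMod 2, (if x ≠ y then 1 else 0 : ZMod 2) = x + y := by decide
  rw [← ZMod.natCast_eq_zero_iff_even, Finset.natCast_card_filter]
  simp only [hjump, Finset.sum_add_distrib]
  rw [Fintype.sum_equiv (Equiv.addRight 1) (fun l => f (l + 1)) f fun _ => rfl,
    CharTwo.add_self_eq_zero]

theorem Fin.card_filter_succ_eq_mod_two {m : ℕ} [NeZero m] (f : Fin m → ZMod 2) :
    #{l | f (l + 1) = f l} % 2 = m % 2 := by
  have hsplit := Finset.card_filter_add_card_filter_not (s := univ) (fun l => f (l + 1) = f l)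
  rw [card_univ, Fintype.card_fin] at hsplit
  obtain ⟨k, hk⟩ := Fin.even_card_filter_succ_ne f
  simp only [ne_eq] at hk
  omega

theorem G2_entries {D : Matrix (Fin 2) (Fin 2) ℕ} (hD : D ∈ G2) :
    D 0 0 + D 1 1 = 1 ∧ D 0 1 + D 1 0 = 1 := by
  rcases hD with rfl | rfl | rfl | rfl <;> simp

theorem mem_G2_of_isDelta {D : Matrix (Fin 2) (Fin 2) ℕ} (hD : IsDelta D)
    (h : D 0 0 + D 1 1 = 1) : D ∈ G2 := by
  obtain ⟨hle, heven⟩ := hD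
  have ha := hle 0 0
  have hb := hle 0 1
  have hc := hle 1 0
  have hd := hle 1 1
  rw [Matrix.eta_fin_two D]
  generalize D 0 0 = a, D 0 1 = b, D 1 0 = c, D 1 1 = d at ha hb hc hd h heven ⊢
  interval_cases a <;> interval_cases b <;> interval_cases c <;> interval_cases d <;>
    simp_all [G2, Nat.even_iff]

theorem G2_horizontal_iff {D : Matrix (Fin 2) (Fin 2) ℕ} (hD : D ∈ G2) :
    (D = !![0,0;1,1] ∨ D = !![1,1;0,0]) ↔ (D 0 1 : ZMod 2) = D 0 0 := by
  rcases hD with rfl | rfl | rfl | rfl <;> decide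

theorem stmt14_general (m : ℕ) [NeZero m]
    (Δ : Fin m → Matrix (Fin 2) (Fin 2) ℕ)
    (hΔ : ∀ l, IsDelta (Δ l))
    -- cyclic reverse domino condition
    (hrev : ∀ l, Δ (l + 1) 0 0 = Δ l 0 1 ∧ Δ (l + 1) 1 1 = Δ l 1 0)
    (h0 : Δ 0 ∈ G2) :
    (∀ l, Δ l ∈ G2) ∧
    Set.ncard {l : Fin m | Δ l = !![0,0;1,1] ∨ Δ l = !![1,1;0,0]} % 2 = m % 2 := by
  have hG2 : ∀ l, Δ l ∈ G2 := Fin.forall_of_cyclic_step h0 fun l hl =>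
    mem_G2_of_isDelta (hΔ _) (by rw [(hrev l).1, (hrev l).2]; exact (G2_entries hl).2)
  refine ⟨hG2, ?_⟩
  have hset : {l : Fin m | Δ l = !![0,0;1,1] ∨ Δ l = !![1,1;0,0]} =
      ↑({l | (Δ (l + 1) 0 0 : ZMod 2) = Δ l 0 0} : Finset (Fin m)) := by
    ext l
    simp [G2_horizontal_iff (hG2 l), (hrev l).1]
  rw [hset, Set.ncard_coe_finset]
  exact Fin.card_filter_succ_eq_mod_two fun l => (Δ l 0 0 : ZMod 2)

theorem stmt14 (m : ℕ) [NeZero m] (hm : 1 ≤ m)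
    (Δ : Fin m → Matrix (Fin 2) (Fin 2) ℕ)
    (hΔ : ∀ l, IsDelta (Δ l))
    -- cyclic reverse domino condition
    (hrev : ∀ l, Δ (l + 1) 0 0 = Δ l 0 1 ∧ Δ (l + 1) 1 1 = Δ l 1 0)
    (h0 : Δ 0 ∈ G2) :
    (∀ l, Δ l ∈ G2) ∧
    Set.ncard {l : Fin m | Δ l = !![0,0;1,1] ∨ Δ l = !![1,1;0,0]} % 2 = m % 2 :=
  stmt14_general m Δ hΔ hrev h0
end
end
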